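/- arXiv:2001.04810 — 5 statements merged into one kernel-verified Lean document; each statement's English description precedes it below -/
import Mathlib

section
/- Define $c_q = \frac{\binom{K}{q+1} - \binom{K-m}{q+1}}{\binom{K}{q}}$ for $q \in [0:K]$ where $m = \min(K,N)$ for positive integers $K > N$. Then for all $q \in [1:K-1]$, $c_{q+1} - c_q \geq c_q - c_{q-1}$, i.e., the sequence $(c_q)$ is convex. -/
lemma chooseQ (n k : ℕ) : ((k:ℚ)+1) * (n.choose (k+1)) = ((n:ℚ) - k) * n.choose k := by
  rcases le_or_gt (k+1) n with h | h
  · have hk : k ≤ n := Nat.le_of_succ_le h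
    have h0 := Nat.choose_succ_right_eq n k
    have h1 : ((n.choose (k+1) : ℚ)) * ((k:ℚ)+1) = (n.choose k : ℚ) * ((n : ℚ) - k) := by
      rw [← Nat.cast_sub hk]
      exact_mod_cast h0
    linarith
  · rcases Nat.lt_or_ge n k with h2 | h2
    · rw [Nat.choose_eq_zero_of_lt h2, Nat.choose_eq_zero_of_lt (by omega)]
      simp
    · have hnk : n = k := by omega
      subst hnk
      rw [Nat.choose_self, Nat.choose_eq_zero_of_lt (by omega)]
      simp

lemma aux (K L q : ℕ) (hLK : L < K) (hq1 : 1 ≤ q) (hqK : q ≤ K - 1) :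
    (Nat.choose L q : ℚ)/(Nat.choose K q) - (Nat.choose L (q-1) : ℚ)/(Nat.choose K (q-1))
      ≤ (Nat.choose L (q+1) : ℚ)/(Nat.choose K (q+1)) - (Nat.choose L q : ℚ)/(Nat.choose K q) := by
  obtain ⟨p, rfl⟩ : ∃ p, q = p + 1 := ⟨q - 1, by omega⟩
  have hpK : p + 2 ≤ K := by omega
  have ha : (0:ℚ) < Nat.choose K p := by exact_mod_cast Nat.choose_pos (by omega)
  have h1 := chooseQ K p
  have h2 := chooseQ K (p+1)
  have h3 := chooseQ L p
  have h4 := chooseQ L (p+1)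
  have hA : (0:ℚ) ≤ Nat.choose L p := by positivity
  have hKL : (1:ℚ) ≤ (K:ℚ) - L := by
    have : (L:ℚ) + 1 ≤ K := by exact_mod_cast hLK
    linarith
  have hx : (2:ℚ) ≤ (K:ℚ) - p := by
    have : ((p:ℚ) + 2) ≤ K := by exact_mod_cast hpK
    linarith
  have hp1 : ((p:ℚ)+1) ≠ 0 := by positivity
  have hp2 : ((p:ℚ)+2) ≠ 0 := by positivity
  have eb : (Nat.choose K (p+1) : ℚ) = ((K:ℚ) - p) * Nat.choose K p / ((p:ℚ)+1) := by
    field_simp; linarith [h1]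
  have ec : (Nat.choose K (p+2) : ℚ)
      = ((K:ℚ) - p - 1) * (((K:ℚ) - p) * Nat.choose K p / ((p:ℚ)+1)) / ((p:ℚ)+2) := by
    rw [← eb]
    field_simp
    push_cast at h2
    linarith [h2]
  have eB : (Nat.choose L (p+1) : ℚ) = ((L:ℚ) - p) * Nat.choose L p / ((p:ℚ)+1) := by
    field_simp; linarith [h3]
  have eC : (Nat.choose L (p+2) : ℚ)
      = ((L:ℚ) - p - 1) * (((L:ℚ) - p) * Nat.choose L p / ((p:ℚ)+1)) / ((p:ℚ)+2) := by
    rw [← eB]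
    field_simp
    push_cast at h4
    linarith [h4]
  simp only [Nat.add_sub_cancel]
  have ha' : (Nat.choose K p : ℚ) ≠ 0 := ne_of_gt ha
  have hx' : ((K:ℚ) - p) ≠ 0 := by linarith
  have hx1' : ((K:ℚ) - p - 1) ≠ 0 := by linarith
  have key : (Nat.choose L (p+1+1) : ℚ)/(Nat.choose K (p+1+1))
        - (Nat.choose L (p+1) : ℚ)/(Nat.choose K (p+1))
        - ((Nat.choose L (p+1) : ℚ)/(Nat.choose K (p+1)) - (Nat.choose L p : ℚ)/(Nat.choose K p))
      = (Nat.choose L p : ℚ) * ((K:ℚ) - L) * ((K:ℚ) - L - 1)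
        / ((Nat.choose K p : ℚ) * (((K:ℚ) - p) * ((K:ℚ) - p - 1))) := by
    rw [show p+1+1 = p+2 from rfl, eb, ec, eB, eC]
    field_simp
    ring
  have hnum : (0:ℚ) ≤ (Nat.choose L p : ℚ) * ((K:ℚ) - L) * ((K:ℚ) - L - 1) := by
    apply mul_nonneg (mul_nonneg hA (by linarith)) (by linarith)
  have hden : (0:ℚ) < (Nat.choose K p : ℚ) * (((K:ℚ) - p) * ((K:ℚ) - p - 1)) := by
    apply mul_pos ha (mul_pos (by linarith) (by linarith))
  have := div_nonneg hnum (le_of_lt hden)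
  linarith [key, this]

/-- Convexity of the sequence `c_q` for `K > N ≥ 1`. -/
theorem stmt_2 (K N : ℕ) (hN : 1 ≤ N) (hKN : N < K) (q : ℕ) (hq1 : 1 ≤ q) (hqK : q ≤ K - 1) :
    let c : ℕ → ℚ := fun q =>
      ((Nat.choose K (q+1) : ℚ) - (Nat.choose (K - min K N) (q+1) : ℚ)) / (Nat.choose K q : ℚ)
    c q - c (q-1) ≤ c (q+1) - c q := by
  intro c
  have hmin : min K N = N := min_eq_right (le_of_lt hKN)
  set M := K - N with hM
  have hMN : M + N = K := Nat.sub_add_cancel (le_of_lt hKN)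
  -- telescoping identity
  have tel : ∀ j : ℕ, ((Nat.choose K (j+1) : ℚ) - (Nat.choose M (j+1) : ℚ))
      = ∑ i ∈ Finset.range N, (Nat.choose (M + i) j : ℚ) := by
    intro j
    have hsum := Finset.sum_range_sub (fun i => ((M + i).choose (j+1) : ℚ)) N
    rw [hMN] at hsum
    simp only [Nat.add_zero] at hsum
    rw [← hsum]
    apply Finset.sum_congr rfl
    intro i _
    have : (M + (i+1)).choose (j+1) = (M + i).choose j + (M + i).choose (j+1) := by
      rw [show M + (i+1) = (M + i) + 1 from rfl]
      exact Nat.choose_succ_succ _ _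
    push_cast [this]
    ring
  have hc : ∀ j : ℕ, c j = ∑ i ∈ Finset.range N, (Nat.choose (M + i) j : ℚ) / (Nat.choose K j : ℚ) := by
    intro j
    show ((Nat.choose K (j+1) : ℚ) - (Nat.choose (K - min K N) (j+1) : ℚ)) / _ = _
    rw [hmin, ← hM, tel j, Finset.sum_div]
  rw [hc q, hc (q-1), hc (q+1), ← Finset.sum_sub_distrib, ← Finset.sum_sub_distrib]
  apply Finset.sum_le_sum
  intro i hi
  apply aux K (M + i) q _ hq1 hqK
  have : i < N := Finset.mem_range.mp hi
  omega
end

section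
/- Define $c_q = \sum_{i=1}^{m} \frac{\binom{K-i}{q}}{\binom{K}{q}}$ for $q \in [0:K]$, with $m = \min(K,N)$ for positive integers $K, N$ with $m \geq 1$. Then $c_q$ is strictly decreasing in $q$ on $[0:K-1]$ whenever $c_q > 0$; in particular $c_q - c_{q-1} \leq 0$ for all $q \in [1:K]$. -/
lemma natkey {n K q : ℕ} (h : n ≤ K) :
    n.choose (q+1) * K.choose q ≤ n.choose q * K.choose (q+1) := by
  have h1 : (q+1) * (n.choose (q+1) * K.choose q) ≤ (q+1) * (n.choose q * K.choose (q+1)) := by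
    have e1 : (q+1) * (n.choose (q+1) * K.choose q)
        = n.choose q * K.choose q * (n - q) := by
      rw [show (q+1) * (n.choose (q+1) * K.choose q) = n.choose (q+1) * (q+1) * K.choose q by ring,
        Nat.choose_succ_right_eq]; ring
    have e2 : (q+1) * (n.choose q * K.choose (q+1))
        = n.choose q * K.choose q * (K - q) := by
      rw [show (q+1) * (n.choose q * K.choose (q+1)) = n.choose q * (K.choose (q+1) * (q+1)) by ring,
        Nat.choose_succ_right_eq]; ring
    rw [e1, e2]
    exact Nat.mul_le_mul_left _ (Nat.sub_le_sub_right h q)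
  exact Nat.le_of_mul_le_mul_left h1 (Nat.succ_pos q)

lemma natkeylt {n K q : ℕ} (hn : n < K) (hq : q ≤ n) :
    n.choose (q+1) * K.choose q < n.choose q * K.choose (q+1) := by
  have h1 : (q+1) * (n.choose (q+1) * K.choose q) < (q+1) * (n.choose q * K.choose (q+1)) := by
    have e1 : (q+1) * (n.choose (q+1) * K.choose q)
        = n.choose q * K.choose q * (n - q) := by
      rw [show (q+1) * (n.choose (q+1) * K.choose q) = n.choose (q+1) * (q+1) * K.choose q by ring,
        Nat.choose_succ_right_eq]; ring
    have e2 : (q+1) * (n.choose q * K.choose (q+1))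
        = n.choose q * K.choose q * (K - q) := by
      rw [show (q+1) * (n.choose q * K.choose (q+1)) = n.choose q * (K.choose (q+1) * (q+1)) by ring,
        Nat.choose_succ_right_eq]; ring
    rw [e1, e2]
    have hpos : 0 < n.choose q * K.choose q :=
      Nat.mul_pos (Nat.choose_pos hq) (Nat.choose_pos (hq.trans hn.le))
    exact (mul_lt_mul_iff_right₀ hpos).mpr (by omega)
  exact Nat.lt_of_mul_lt_mul_left h1

lemma qkey {n K q : ℕ} (h : n ≤ K) (hqK : q + 1 ≤ K) :
    (n.choose (q+1) : ℚ) / (K.choose (q+1) : ℚ) ≤ (n.choose q : ℚ) / (K.choose q : ℚ) := by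
  have p1 : (0:ℚ) < (K.choose (q+1) : ℚ) := by exact_mod_cast Nat.choose_pos hqK
  have p2 : (0:ℚ) < (K.choose q : ℚ) := by exact_mod_cast Nat.choose_pos (by omega)
  rw [div_le_div_iff₀ p1 p2]
  exact_mod_cast natkey h

lemma qkeylt {n K q : ℕ} (hn : n < K) (hq : q ≤ n) :
    (n.choose (q+1) : ℚ) / (K.choose (q+1) : ℚ) < (n.choose q : ℚ) / (K.choose q : ℚ) := by
  have p1 : (0:ℚ) < (K.choose (q+1) : ℚ) := by exact_mod_cast Nat.choose_pos (by omega)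
  have p2 : (0:ℚ) < (K.choose q : ℚ) := by exact_mod_cast Nat.choose_pos (by omega)
  rw [div_lt_div_iff₀ p1 p2]
  exact_mod_cast natkeylt hn hq

/-- `c_q` is strictly decreasing on `[0:K-1]` whenever `c_q > 0`;
in particular `c_q - c_{q-1} ≤ 0` for all `q ∈ [1:K]`. -/
theorem stmt_4 (K N : ℕ) (hK : 1 ≤ K) (hN : 1 ≤ N) :
    let c : ℕ → ℚ := fun q =>
      ∑ i ∈ Finset.Icc 1 (min K N), (Nat.choose (K - i) q : ℚ) / (Nat.choose K q : ℚ)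
    (∀ q, q ≤ K - 1 → 0 < c q → c (q+1) < c q) ∧
    (∀ q, 1 ≤ q → q ≤ K → c q - c (q-1) ≤ 0) := by
  intro c
  have hm1 : 1 ≤ min K N := le_min hK hN
  constructor
  · intro q hq _
    apply Finset.sum_lt_sum
    · intro i _
      exact qkey (Nat.sub_le K i) (by omega)
    · refine ⟨1, Finset.mem_Icc.mpr ⟨le_refl _, hm1⟩, ?_⟩
      exact qkeylt (by omega) (by omega)
  · intro q h1 h2
    rw [sub_nonpos]
    obtain ⟨p, rfl⟩ : ∃ p, q = p + 1 := ⟨q - 1, by omega⟩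
    simp only [Nat.add_sub_cancel]
    exact Finset.sum_le_sum fun i _ => qkey (Nat.sub_le K i) h2
end

section
/- For positive integers $K, N$ with $m = \min(K,N)$, and real numbers $x_0, \dots, x_K \geq 0$ with $\sum_{t=0}^{K} x_t = 1$ and $\sum_{t=0}^{K} t\, x_t \leq \frac{KM}{N}$ for some real $M \in [0, N]$, one has for every $q \in [1:K]$: $\sum_{t=0}^{K} c_t x_t \geq c_q + (c_q - c_{q-1})\left(\frac{KM}{N} - q\right)$, where $c_t = \frac{\binom{K}{t+1} - \binom{K-m}{t+1}}{\binom{K}{t}}$. -/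
open Finset

lemma hockey (r t : ℕ) : ∀ u, r ≤ u →
    Nat.choose r (t+1) + ∑ j ∈ Ico r u, Nat.choose j t = Nat.choose u (t+1) := by
  intro u
  induction u with
  | zero => intro h; interval_cases r; simp
  | succ n ih =>
    intro h
    rcases eq_or_lt_of_le h with h' | h'
    · subst h'; simp
    · have hrn : r ≤ n := Nat.lt_succ_iff.mp h'
      have := ih hrn
      rw [Finset.sum_Ico_succ_top hrn]
      have hp := Nat.choose_succ_succ n t
      simp only [Nat.succ_eq_add_one] at hp
      omega

lemma f_step (K j s : ℕ) (hs : s + 1 ≤ K) :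
    (Nat.choose j (s+1) : ℝ) / (Nat.choose K (s+1)) =
      ((Nat.choose j s : ℝ) / (Nat.choose K s)) * (((j - s : ℕ) : ℝ) / ((K - s : ℕ) : ℝ)) := by
  have h1 : (Nat.choose j (s+1) : ℝ) * (s+1) = (Nat.choose j s : ℝ) * ((j - s : ℕ) : ℝ) := by
    exact_mod_cast congrArg (Nat.cast : ℕ → ℝ) (Nat.choose_succ_right_eq j s)
  have h2 : (Nat.choose K (s+1) : ℝ) * (s+1) = (Nat.choose K s : ℝ) * ((K - s : ℕ) : ℝ) := by
    exact_mod_cast congrArg (Nat.cast : ℕ → ℝ) (Nat.choose_succ_right_eq K s)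
  have hK0 : (0:ℝ) < (Nat.choose K s : ℝ) := by
    exact_mod_cast Nat.choose_pos (le_trans (Nat.le_succ s) hs)
  have hKs : (0:ℝ) < ((K - s : ℕ) : ℝ) := by
    have : 0 < K - s := by omega
    exact_mod_cast this
  have hK1 : (0:ℝ) < (Nat.choose K (s+1) : ℝ) := by
    exact_mod_cast Nat.choose_pos hs
  have hs1 : (0:ℝ) < ((s:ℝ)+1) := by positivity
  field_simp
  apply mul_left_cancel₀ (show ((s:ℝ)+1) ≠ 0 by positivity)
  linear_combination ((Nat.choose K s : ℝ) * ((K - s : ℕ) : ℝ)) * h1 -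
    ((Nat.choose j s : ℝ) * ((j - s : ℕ) : ℝ)) * h2

lemma f_convex (K j : ℕ) (hj : j < K) (t : ℕ) (ht : 1 ≤ t) :
    2 * ((Nat.choose j t : ℝ) / (Nat.choose K t)) ≤
      (Nat.choose j (t+1) : ℝ) / (Nat.choose K (t+1)) +
      (Nat.choose j (t-1) : ℝ) / (Nat.choose K (t-1)) := by
  obtain ⟨s, rfl⟩ : ∃ s, t = s + 1 := ⟨t - 1, by omega⟩
  simp only [Nat.add_sub_cancel]
  by_cases hsK : s + 2 ≤ K
  · have h1 := f_step K j (s+1) hsK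
    have h2 := f_step K j s (by omega)
    have hf0 : (0:ℝ) ≤ (Nat.choose j s : ℝ) / (Nat.choose K s) := by positivity
    set f0 : ℝ := (Nat.choose j s : ℝ) / (Nat.choose K s) with hf0def
    rw [h2]
    rw [show s + 1 + 1 = s + 2 from rfl] at h1
    rw [h1, h2]
    have hAB : j - s + 1 ≤ K - s := by omega
    have hB2 : 2 ≤ K - s := by omega
    have e1 : K - (s+1) = (K - s) - 1 := by omega
    have e2 : j - (s+1) = (j - s) - 1 := by omega
    rw [e1, e2]
    set A := j - s with hA
    set B := K - s with hB
    rcases Nat.eq_zero_or_pos A with hA0 | hA1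
    · rw [hA0]; simp
      positivity
    · have cA : ((A - 1 : ℕ) : ℝ) = (A : ℝ) - 1 := by
        have : 1 ≤ A := hA1; push_cast [this]; ring
      have cB : ((B - 1 : ℕ) : ℝ) = (B : ℝ) - 1 := by
        have : 1 ≤ B := by omega
        push_cast [this]; ring
      rw [cA, cB]
      have hBpos : (0:ℝ) < (B:ℝ) := by exact_mod_cast (by omega : 0 < B)
      have hB1pos : (0:ℝ) < (B:ℝ) - 1 := by
        have : (2:ℝ) ≤ (B:ℝ) := by exact_mod_cast hB2
        linarith
      have hA1' : (1:ℝ) ≤ (A:ℝ) := by exact_mod_cast hA1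
      have hAB' : (A:ℝ) + 1 ≤ (B:ℝ) := by exact_mod_cast hAB
      have key : 2 * ((A:ℝ)/(B:ℝ)) ≤ ((A:ℝ)/(B:ℝ)) * (((A:ℝ)-1)/((B:ℝ)-1)) + 1 := by
        have expand : ((A:ℝ)/(B:ℝ)) * (((A:ℝ)-1)/((B:ℝ)-1)) + 1 - 2*((A:ℝ)/(B:ℝ))
            = (((B:ℝ)-(A:ℝ))*((B:ℝ)-(A:ℝ)-1)) / ((B:ℝ)*((B:ℝ)-1)) := by
          field_simp
          ring
        have hnum : (0:ℝ) ≤ (((B:ℝ)-(A:ℝ))*((B:ℝ)-(A:ℝ)-1)) / ((B:ℝ)*((B:ℝ)-1)) := by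
          apply div_nonneg
          · nlinarith
          · positivity
        linarith [expand, hnum]
      calc 2 * (f0 * ((A:ℝ)/(B:ℝ))) = f0 * (2 * ((A:ℝ)/(B:ℝ))) := by ring
        _ ≤ f0 * (((A:ℝ)/(B:ℝ)) * (((A:ℝ)-1)/((B:ℝ)-1)) + 1) :=
            mul_le_mul_of_nonneg_left key hf0
        _ = f0 * ((A:ℝ)/(B:ℝ)) * (((A:ℝ)-1)/((B:ℝ)-1)) + f0 := by ring
  · -- K ≤ s+1 : middle term is zero
    have hjz : Nat.choose j (s+1) = 0 := Nat.choose_eq_zero_of_lt (by omega)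
    rw [hjz]
    simp
    positivity

lemma f_mono (K j q : ℕ) (hj : j < K) (hq : 1 ≤ q) :
    (Nat.choose j q : ℝ) / (Nat.choose K q) ≤
      (Nat.choose j (q-1) : ℝ) / (Nat.choose K (q-1)) := by
  obtain ⟨s, rfl⟩ : ∃ s, q = s + 1 := ⟨q - 1, by omega⟩
  simp only [Nat.add_sub_cancel]
  by_cases hsK : s + 1 ≤ K
  · rw [f_step K j s hsK]
    have hf0 : (0:ℝ) ≤ (Nat.choose j s : ℝ) / (Nat.choose K s) := by positivity
    have hr : ((j - s : ℕ) : ℝ) / ((K - s : ℕ) : ℝ) ≤ 1 := by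
      apply div_le_one_of_le₀
      · exact_mod_cast (by omega : j - s ≤ K - s)
      · positivity
    nlinarith [hf0, hr, div_nonneg (by positivity : (0:ℝ) ≤ ((j-s:ℕ):ℝ)) (by positivity : (0:ℝ) ≤ ((K-s:ℕ):ℝ))]
  · have : Nat.choose j (s+1) = 0 := Nat.choose_eq_zero_of_lt (by omega)
    rw [this]
    simp
    positivity

lemma chain (g : ℕ → ℝ) (hc : ∀ t, 1 ≤ t → 2 * g t ≤ g (t+1) + g (t-1))
    (q : ℕ) (hq : 1 ≤ q) (t : ℕ) :
    g q + (g q - g (q-1)) * ((t:ℝ) - (q:ℝ)) ≤ g t := by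
  have Dmono : ∀ a b, 1 ≤ a → a ≤ b → g a - g (a-1) ≤ g b - g (b-1) := by
    intro a b ha hab
    induction b with
    | zero => omega
    | succ n ih =>
      rcases eq_or_lt_of_le hab with h' | h'
      · rw [h']
      · have han : a ≤ n := by omega
        have h1n : 1 ≤ n := by omega
        have := hc n h1n
        have := ih han
        have e : n + 1 - 1 = n := by omega
        rw [e]
        linarith
  set D : ℝ := g q - g (q-1) with hD
  have up : ∀ k : ℕ, g q + D * (k:ℝ) ≤ g (q + k) := by
    intro k
    induction k with
    | zero => simp
    | succ n ih =>
      have hd : D ≤ g (q+n+1) - g (q+n) := by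
        have := Dmono q (q+n+1) hq (by omega)
        have e : q + n + 1 - 1 = q + n := by omega
        rw [e] at this
        exact this
      push_cast
      have e : q + (n+1) = q + n + 1 := by omega
      rw [e]
      linarith
  have down : ∀ k : ℕ, k ≤ q → g q - D * (k:ℝ) ≤ g (q - k) := by
    intro k
    induction k with
    | zero => simp
    | succ n ih =>
      intro hkq
      have hn : n ≤ q := by omega
      have h1 : 1 ≤ q - n := by omega
      have hd : g (q-n) - g (q-n-1) ≤ D := Dmono (q-n) q h1 (by omega)
      have e : q - (n+1) = q - n - 1 := by omega
      rw [e]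
      have := ih hn
      push_cast
      linarith
  rcases le_or_gt q t with h | h
  · have e : t = q + (t - q) := by omega
    have := up (t - q)
    rw [← e] at this
    have ec : ((t - q : ℕ):ℝ) = (t:ℝ) - (q:ℝ) := by
      push_cast [h]; ring
    rw [ec] at this
    exact this
  · have e : t = q - (q - t) := by omega
    have := down (q - t) (by omega)
    rw [← e] at this
    have ec : ((q - t : ℕ):ℝ) = (q:ℝ) - (t:ℝ) := by
      push_cast [le_of_lt h]; ring
    rw [ec] at this
    linarith

/-- The linear-programming lower bound: for any pmf `(x_t)` with first-moment
constraint, `∑ c_t x_t ≥ c_q + (c_q - c_{q-1})(KM/N - q)` for every `q ∈ [1:K]`. -/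
theorem stmt_5 (K N : ℕ) (hK : 1 ≤ K) (hN : 1 ≤ N) (M : ℝ) (hM0 : 0 ≤ M) (hMN : M ≤ N)
    (x : ℕ → ℝ) (hx : ∀ t, 0 ≤ x t)
    (hsum : ∑ t ∈ Finset.range (K+1), x t = 1)
    (hmom : ∑ t ∈ Finset.range (K+1), (t : ℝ) * x t ≤ (K : ℝ) * M / N)
    (q : ℕ) (hq1 : 1 ≤ q) (hqK : q ≤ K) :
    let c : ℕ → ℝ := fun t =>
      ((Nat.choose K (t+1) : ℝ) - (Nat.choose (K - min K N) (t+1) : ℝ)) / (Nat.choose K t : ℝ)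
    ∑ t ∈ Finset.range (K+1), c t * x t
      ≥ c q + (c q - c (q-1)) * ((K : ℝ) * M / N - (q : ℝ)) := by
  intro c
  have hm1 : 1 ≤ min K N := le_min hK hN
  set r := K - min K N with hr
  have hrK : r ≤ K := by omega
  have hceq : ∀ t, c t = ∑ j ∈ Ico r K, (Nat.choose j t : ℝ) / (Nat.choose K t) := by
    intro t
    have hh := hockey r t K hrK
    have hcast : (Nat.choose K (t+1) : ℝ) - (Nat.choose r (t+1) : ℝ)
        = ∑ j ∈ Ico r K, (Nat.choose j t : ℝ) := by
      have h2 : ((Nat.choose r (t+1) + ∑ j ∈ Ico r K, Nat.choose j t : ℕ) : ℝ)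
          = (Nat.choose K (t+1) : ℝ) := by exact_mod_cast congrArg (Nat.cast : ℕ → ℝ) hh
      push_cast at h2
      linarith
    show ((Nat.choose K (t+1) : ℝ) - (Nat.choose r (t+1) : ℝ)) / (Nat.choose K t : ℝ) = _
    rw [hcast, Finset.sum_div]
  have hconv : ∀ t, 1 ≤ t → 2 * c t ≤ c (t+1) + c (t-1) := by
    intro t ht
    rw [hceq, hceq, hceq, Finset.mul_sum, ← Finset.sum_add_distrib]
    apply Finset.sum_le_sum
    intro j hj
    exact f_convex K j (Finset.mem_Ico.mp hj).2 t ht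
  have hmono : c q ≤ c (q-1) := by
    rw [hceq, hceq]
    apply Finset.sum_le_sum
    intro j hj
    exact f_mono K j q (Finset.mem_Ico.mp hj).2 hq1
  set D := c q - c (q-1) with hDdef
  have hD0 : D ≤ 0 := by rw [hDdef]; linarith
  have hpt : ∀ t : ℕ, c q + D * ((t:ℝ) - (q:ℝ)) ≤ c t := fun t => chain c hconv q hq1 t
  have h1 : ∑ t ∈ Finset.range (K+1), (c q + D * ((t:ℝ)-(q:ℝ))) * x t
      ≤ ∑ t ∈ Finset.range (K+1), c t * x t :=
    Finset.sum_le_sum (fun t _ => mul_le_mul_of_nonneg_right (hpt t) (hx t))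
  have expand : ∑ t ∈ Finset.range (K+1), (c q + D * ((t:ℝ)-(q:ℝ))) * x t
      = c q * (∑ t ∈ Finset.range (K+1), x t)
        + D * (∑ t ∈ Finset.range (K+1), (t:ℝ) * x t)
        - D * (q:ℝ) * (∑ t ∈ Finset.range (K+1), x t) := by
    rw [Finset.mul_sum, Finset.mul_sum, Finset.mul_sum, ← Finset.sum_add_distrib,
      ← Finset.sum_sub_distrib]
    exact Finset.sum_congr rfl fun t _ => by ring
  rw [expand, hsum] at h1
  have h2 : D * ((K:ℝ)*M/(N:ℝ) - (q:ℝ))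
      ≤ D * (∑ t ∈ Finset.range (K+1), (t:ℝ) * x t) - D * (q:ℝ) := by
    nlinarith [mul_nonneg (neg_nonneg.2 hD0)
      (sub_nonneg.2 hmom)]
  rw [ge_iff_le]
  have h3 : c q + D * ((K:ℝ)*M/(N:ℝ) - (q:ℝ)) ≤ c q + (D * (∑ t ∈ Finset.range (K+1), (t:ℝ) * x t) - D * (q:ℝ)) := by linarith
  calc c q + D * ((K:ℝ)*M/(N:ℝ) - (q:ℝ))
      ≤ c q + (D * (∑ t ∈ Finset.range (K+1), (t:ℝ) * x t) - D * (q:ℝ)) := h3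
    _ ≤ ∑ t ∈ Finset.range (K+1), c t * x t := by linarith
end

section
/- For positive integers $K, N$ with $m = \min(K,N)$, define $c_q = \frac{\binom{K}{q+1} - \binom{K-m}{q+1}}{\binom{K}{q}}$ and $w_{q,i} = c_i - c_q + (q-i)(c_q - c_{q-1})$ for $q \in [1:K]$, $i \in [0:K]$. Then $w_{q,i} \geq 0$ for all such $q, i$, with equality when $i \in \{q-1, q\}$. -/
/-- cast of `Nat.choose_succ_right_eq` when `q ≤ a`. -/
lemma cast_choose_step (a q : ℕ) (h : q ≤ a) :
    (a.choose (q+1) : ℚ) * (q+1) = (a.choose q : ℚ) * ((a:ℚ) - q) := by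
  have h0 : ((a.choose (q+1) * (q+1) : ℕ) : ℚ) = ((a.choose q * (a - q) : ℕ) : ℚ) := by
    exact_mod_cast congrArg (Nat.cast (R := ℚ)) (Nat.choose_succ_right_eq a q)
  push_cast [Nat.cast_sub h] at h0
  linarith [h0]

/-- hockey stick, rational form. -/
lemma hockey_s6 (n q K : ℕ) (hnK : n ≤ K) :
    (K.choose (q+1) : ℚ) - (n.choose (q+1) : ℚ) = ∑ j ∈ Finset.Ico n K, (j.choose q : ℚ) := by
  induction K, hnK using Nat.le_induction with
  | base => simp
  | succ K hK ih =>
    rw [Finset.sum_Ico_succ_top hK, ← ih, Nat.choose_succ_succ']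
    push_cast; ring

/-- the ratio r K j q = C(j,q)/C(K,q). -/
noncomputable def rr (K j q : ℕ) : ℚ := (j.choose q : ℚ) / (K.choose q : ℚ)

lemma rr_nonneg (K j q : ℕ) : 0 ≤ rr K j q := by
  unfold rr; positivity

lemma rr_step (K j q : ℕ) (hq : q < K) :
    rr K j (q+1) * ((K:ℚ) - q) = rr K j q * ((j:ℚ) - q) := by
  by_cases hj : q ≤ j
  · have h1 := cast_choose_step K q (le_of_lt hq)
    have h2 := cast_choose_step j q hj
    have hK0 : (K.choose q : ℚ) ≠ 0 := by
      exact_mod_cast Nat.choose_pos (le_of_lt hq) |>.ne'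
    have hK1 : (K.choose (q+1) : ℚ) ≠ 0 := by
      exact_mod_cast (Nat.choose_pos hq).ne'
    have hq1 : ((q:ℚ) + 1) ≠ 0 := by positivity
    unfold rr
    field_simp
    nlinarith [h1, h2]
  · push_neg at hj
    have e1 : j.choose q = 0 := Nat.choose_eq_zero_of_lt hj
    have e2 : j.choose (q+1) = 0 := Nat.choose_eq_zero_of_lt (by omega)
    unfold rr
    rw [e1, e2]; simp

lemma rr_convex (K j q : ℕ) (hj : j < K) (hq1 : 1 ≤ q) (hqK : q < K) :
    2 * rr K j q ≤ rr K j (q+1) + rr K j (q-1) := by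
  obtain ⟨p, rfl⟩ : ∃ p, q = p + 1 := ⟨q - 1, by omega⟩
  simp only [Nat.add_sub_cancel]
  set x := rr K j p with hx
  set y := rr K j (p+1) with hy
  set z := rr K j (p+1+1) with hz
  have hxn := rr_nonneg K j p
  have hyn := rr_nonneg K j (p+1)
  have hzn := rr_nonneg K j (p+1+1)
  have rel1 : z * ((K:ℚ) - (p+1)) = y * ((j:ℚ) - (p+1)) := by
    have := rr_step K j (p+1) (by omega)
    push_cast at this ⊢; linarith [this]
  have rel2 : y * ((K:ℚ) - p) = x * ((j:ℚ) - p) := by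
    exact rr_step K j p (by omega)
  rcases lt_trichotomy j (p+1) with hc | hc | hc
  · -- j ≤ p : y = z = 0
    have ey : y = 0 := by
      simp [hy, rr, Nat.choose_eq_zero_of_lt hc]
    have ez : z = 0 := by
      simp [hz, rr, Nat.choose_eq_zero_of_lt (by omega : j < p+1+1)]
    rw [ey, ez]; linarith
  · -- j = p + 1 : z = 0, x = y * (K - p), K - p ≥ 2
    have ez : z = 0 := by
      simp [hz, rr, Nat.choose_eq_zero_of_lt (by omega : j < p+1+1)]
    have hj2 : ((j:ℚ)) = (p:ℚ) + 1 := by exact_mod_cast congrArg (Nat.cast (R := ℚ)) hc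
    have hKp : (2:ℚ) ≤ (K:ℚ) - p := by
      have : p + 2 ≤ K := by omega
      have := (Nat.cast_le (α := ℚ)).mpr this
      push_cast at this; linarith
    rw [hj2] at rel2
    rw [ez]
    nlinarith [rel2, hyn, hKp]
  · -- j ≥ p + 2
    set A : ℚ := (j:ℚ) - (p+1) with hA
    set B : ℚ := (K:ℚ) - (p+1) with hB
    have hA1 : 1 ≤ A := by
      have : p + 2 ≤ j := by omega
      have := (Nat.cast_le (α := ℚ)).mpr this
      push_cast at this; simp only [hA]; linarith
    have hBA : A + 1 ≤ B := by
      have : j + 1 ≤ K := by omega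
      have := (Nat.cast_le (α := ℚ)).mpr this
      push_cast at this; simp only [hA, hB]; linarith
    have rel2' : y * (B + 1) = x * (A + 1) := by
      simp only [hA, hB]; push_cast at rel2; linarith [rel2]
    have rel1' : z * B = y * A := rel1
    have hBpos : 0 < B := by linarith
    have hA1pos : 0 < A + 1 := by linarith
    have key : (z + x - 2*y) * (B * (A+1)) = y * ((B-A) * (B-A-1)) := by
      have e1 : z * B * (A + 1) = y * A * (A + 1) := by rw [rel1']
      have e2 : x * (A + 1) * B = y * (B + 1) * B := by rw [← rel2']
      nlinarith [e1, e2]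
    have hpos : 0 < B * (A + 1) := by positivity
    have hr : 0 ≤ y * ((B-A) * (B-A-1)) := by
      apply mul_nonneg hyn
      apply mul_nonneg <;> linarith
    have : 0 ≤ (z + x - 2*y) * (B * (A+1)) := key ▸ hr
    have := (mul_nonneg_iff_of_pos_right hpos).mp this
    linarith

/-- generic: from monotone slopes, w is nonnegative. -/
lemma w_nonneg_aux (c : ℕ → ℚ) (K q : ℕ) (hq : 1 ≤ q) (hqK : q ≤ K)
    (hs : ∀ a b, 1 ≤ a → a ≤ b → b ≤ K → c a - c (a-1) ≤ c b - c (b-1)) :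
    ∀ i, i ≤ K → 0 ≤ c i - c q + ((q:ℚ) - (i:ℚ)) * (c q - c (q-1)) := by
  set W : ℕ → ℚ := fun i => c i - c q + ((q:ℚ) - (i:ℚ)) * (c q - c (q-1)) with hW
  have step : ∀ i, W (i+1) = W i + ((c (i+1) - c i) - (c q - c (q-1))) := by
    intro i
    simp only [hW]
    push_cast
    ring
  have base : W q = 0 := by simp only [hW]; ring
  have up : ∀ d, q + d ≤ K → 0 ≤ W (q + d) := by
    intro d
    induction d with
    | zero => intro _; simp [base]
    | succ d ih =>
      intro hd
      have h1 : 0 ≤ W (q + d) := ih (by omega)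
      have h2 : c q - c (q-1) ≤ c (q+d+1) - c (q+d+1-1) := hs q (q+d+1) hq (by omega) (by omega)
      have h3 : q + d + 1 - 1 = q + d := by omega
      rw [h3] at h2
      have hst := step (q + d)
      have e : q + (d+1) = q + d + 1 := by omega
      rw [e]
      linarith [hst]
  have down : ∀ d, ∀ i, i + d = q → 0 ≤ W i := by
    intro d
    induction d with
    | zero =>
      intro i hi
      obtain rfl : i = q := by omega
      linarith [base]
    | succ d ih =>
      intro i hi
      have h1 : 0 ≤ W (i+1) := ih (i+1) (by omega)
      have h2 : c (i+1) - c (i+1-1) ≤ c q - c (q-1) := hs (i+1) q (by omega) (by omega) hqK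
      have h3 : i + 1 - 1 = i := by omega
      rw [h3] at h2
      have := step i
      linarith [this]
  intro i hi
  rcases le_or_gt i q with h | h
  · exact down (q - i) i (by omega)
  · have : i = q + (i - q) := by omega
    rw [this]
    exact up (i - q) (by omega)

/-- Nonnegativity of `w_{q,i} = c_i - c_q + (q-i)(c_q - c_{q-1})`,
with equality when `i ∈ {q-1, q}`. -/
theorem stmt_6 (K N : ℕ) (hK : 1 ≤ K) (hN : 1 ≤ N) :
    let c : ℕ → ℚ := fun q =>
      ((Nat.choose K (q+1) : ℚ) - (Nat.choose (K - min K N) (q+1) : ℚ)) / (Nat.choose K q : ℚ)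
    let w : ℕ → ℕ → ℚ := fun q i => c i - c q + ((q : ℚ) - (i : ℚ)) * (c q - c (q-1))
    ∀ q, 1 ≤ q → q ≤ K → ∀ i, i ≤ K →
      0 ≤ w q i ∧ ((i = q - 1 ∨ i = q) → w q i = 0) := by
  intro c w q hq hqK i hi
  set n := K - min K N with hn
  have hnK : n < K := by omega
  -- c as a sum of rr
  have csum : ∀ p, p ≤ K → c p = ∑ j ∈ Finset.Ico n K, rr K j p := by
    intro p hp
    show ((K.choose (p+1) : ℚ) - (n.choose (p+1) : ℚ)) / (K.choose p : ℚ) = _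
    rw [hockey_s6 n p K (le_of_lt hnK), Finset.sum_div]
    rfl
  -- convexity of c
  have cconv : ∀ p, 1 ≤ p → p < K → 2 * c p ≤ c (p+1) + c (p-1) := by
    intro p hp1 hpK
    rw [csum p (by omega), csum (p+1) (by omega), csum (p-1) (by omega),
        Finset.mul_sum, ← Finset.sum_add_distrib]
    apply Finset.sum_le_sum
    intro j hj
    simp only [Finset.mem_Ico] at hj
    exact rr_convex K j p hj.2 hp1 hpK
  -- slope monotonicity
  have smono : ∀ a b, 1 ≤ a → a ≤ b → b ≤ K → c a - c (a-1) ≤ c b - c (b-1) := by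
    intro a b ha
    induction b with
    | zero => intro hab _; exact absurd hab (by omega)
    | succ b ih =>
      intro hab hbK
      rcases Nat.lt_or_ge a (b+1) with hc | hc
      · have h1 : c a - c (a-1) ≤ c b - c (b-1) := ih (by omega) (by omega)
        have h2 := cconv b (by omega) (by omega)
        have h3 : b + 1 - 1 = b := by omega
        rw [h3]
        obtain ⟨b2, rfl⟩ : ∃ b2, b = b2 + 1 := ⟨b - 1, by omega⟩
        simp only [Nat.add_sub_cancel] at h1 h2 ⊢
        linarith
      · obtain rfl : a = b + 1 := by omega
        exact le_rfl
  constructor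
  · exact w_nonneg_aux c K q hq hqK smono i hi
  · rintro (h | h) <;> rw [h]
    · show c (q-1) - c q + ((q:ℚ) - ((q-1:ℕ):ℚ)) * (c q - c (q-1)) = 0
      have : ((q-1:ℕ):ℚ) = (q:ℚ) - 1 := by
        rw [Nat.cast_sub hq]; simp
      rw [this]; ring
    · show c q - c q + ((q:ℚ) - (q:ℚ)) * (c q - c (q-1)) = 0
      ring
end

section
/- For $K = N = 3$: if nonnegative reals $x_0, x_1, x_2, x_3$ satisfy $x_0 + x_1 + x_2 + x_3 = 1$ and $x_1 + 2x_2 + 3x_3 \leq M$ for some real $M \in [0,3]$, then $3x_0 + x_1 + \tfrac{1}{3}x_2 \geq \max\{3 - 2M, \; \tfrac{5}{3} - \tfrac{2}{3}M, \; 1 - \tfrac{1}{3}M, \; 0\}$. -/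
/-! Each of the four lower bounds is a nonnegative combination of the constraints
`x_t ≥ 0`, `Σ x_t = 1` and `Σ t x_t ≤ M`, the certificates being the Fourier–Motzkin
multipliers. -/

theorem stmt_12_general (M x0 x1 x2 x3 : ℝ) (h0 : 0 ≤ x0) (h1 : 0 ≤ x1) (h2 : 0 ≤ x2) (h3 : 0 ≤ x3)
    (hsum : x0 + x1 + x2 + x3 = 1) (hmom : x1 + 2*x2 + 3*x3 ≤ M) :
    3*x0 + x1 + (1/3)*x2
      ≥ max (max (3 - 2*M) (5/3 - (2/3)*M)) (max (1 - (1/3)*M) 0) := by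
  refine max_le (max_le ?_ ?_) (max_le ?_ ?_)
  · linear_combination 2 * hmom + (4/3) * h2 + 3 * h3 - 3 * hsum
  · linear_combination (2/3) * hmom + (4/3) * h0 + (1/3) * h3 - (5/3) * hsum
  · linear_combination (1/3) * hmom + 2 * h0 + (1/3) * h1 - hsum
  · linear_combination 3 * h0 + h1 + (1/3) * h2

/-- Fourier–Motzkin elimination step in the `N = K = 3` caching converse example. -/
theorem stmt_12 (M x0 x1 x2 x3 : ℝ) (h0 : 0 ≤ x0) (h1 : 0 ≤ x1) (h2 : 0 ≤ x2) (h3 : 0 ≤ x3)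
    (hM0 : 0 ≤ M) (hM3 : M ≤ 3)
    (hsum : x0 + x1 + x2 + x3 = 1) (hmom : x1 + 2*x2 + 3*x3 ≤ M) :
    3*x0 + x1 + (1/3)*x2
      ≥ max (max (3 - 2*M) (5/3 - (2/3)*M)) (max (1 - (1/3)*M) 0) :=
  stmt_12_general M x0 x1 x2 x3 h0 h1 h2 h3 hsum hmom
end
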